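/- Let n ≥ 3 be an integer and r₁ = 2n/(n+2). There exists a constant C > 0 depending only on n such that for every μ ∈ (0, 1], ‖U₁^{r₁−1}‖_{L^{r₁}(B_{1/μ}⁺)} = (∫_{B_{1/μ}⁺} U₁(x)^{(r₁−1) r₁} dx)^{1/r₁} ≤ C (1 + μ^{(n²−12n+4)/(2(n+2))}). -/

import Mathlib

open MeasureTheory Real

/-- The sharp constant `S = (π n(n−2))⁻¹ (Γ(n)/Γ(n/2))^{2/n}` in the Sobolev
inequality on `ℝⁿ`. -/
noncomputable def sobolevS (n : ℕ) : ℝ :=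
  (π * n * ((n : ℝ) - 2))⁻¹ * (Real.Gamma n / Real.Gamma ((n : ℝ) / 2)) ^ ((2 : ℝ) / n)

/-- The constant `c(n) = 1/(2^{2/n}(n−2) n S)`. -/
noncomputable def bubbleC (n : ℕ) : ℝ :=
  1 / (2 ^ ((2 : ℝ) / n) * ((n : ℝ) - 2) * n * sobolevS n)

/-- The bubble `U_{x₀,λ}(x) = (λ/(λ² + c(n)|x−x₀|²))^{(n−2)/2}`. -/
noncomputable def bubble (n : ℕ) (x₀ : EuclideanSpace ℝ (Fin n)) (lam : ℝ)
    (x : EuclideanSpace ℝ (Fin n)) : ℝ :=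
  (lam / (lam ^ 2 + bubbleC n * ‖x - x₀‖ ^ 2)) ^ (((n : ℝ) - 2) / 2)

/-- The last coordinate `xₙ` of a point of `ℝⁿ`. -/
noncomputable def xlast (n : ℕ) (x : EuclideanSpace ℝ (Fin n)) : ℝ :=
  if h : n = 0 then 0 else x ⟨n - 1, by omega⟩

/-- The open upper half-space `ℝⁿ₊ = {x : xₙ > 0}`. -/
def upperHalf (n : ℕ) : Set (EuclideanSpace ℝ (Fin n)) := {x | 0 < xlast n x}

/-!
Since `U₁ ^ ((r₁ - 1) r₁) = (1 + c|x|²)^(-e)` with `e = n(n-2)²/(n+2)²`, enlarging the half-ball to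
the full ball and passing to polar coordinates reduces the integral to
`n |B₁| ∫₀^R y^(n-1) (1 + c y²)^(-e) dy` with `R = 1/μ`. On `[0, 1]` the integrand is at most `1`;
on `[1, R]` it is at most `c^(-e) y^(β-1)` with `β = n - 2e = n(12n - n² - 4)/(n+2)²`, which never
vanishes for integer `n`, so that part is `O(1 + R^β)`. Raising to the power `s = (n+2)/(2n) ≤ 1`
gives `O(1 + R^(βs))`, and `R^(βs) = μ^((n² - 12n + 4)/(2(n+2)))`.
-/

open Metric Set

lemma integral_rpow_sub_one_le {β R : ℝ} (hβ : β ≠ 0) (hR : 1 ≤ R) :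
    ∫ y in (1 : ℝ)..R, y ^ (β - 1) ≤ (1 + R ^ β) / |β| := by
  have h0 : (0 : ℝ) ∉ uIcc 1 R := by simp [uIcc_of_le hR]
  rw [integral_rpow (Or.inr ⟨by contrapose! hβ; linarith, h0⟩), sub_add_cancel, one_rpow]
  calc (R ^ β - 1) / β ≤ |(R ^ β - 1) / β| := le_abs_self _
    _ ≤ (1 + R ^ β) / |β| := by
      have hRβ : 0 ≤ R ^ β := rpow_nonneg (zero_le_one.trans hR) β
      rw [abs_div]
      refine div_le_div_of_nonneg_right ((abs_sub _ _).trans ?_) (abs_nonneg β)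
      rw [abs_one, abs_of_nonneg hRβ, add_comm]

section Radial

variable {c e : ℝ}

lemma continuous_pow_mul_one_add_mul_sq_rpow (hc : 0 ≤ c) (d : ℕ) (a : ℝ) :
    Continuous fun y : ℝ ↦ y ^ d * (1 + c * y ^ 2) ^ a :=
  (continuous_pow d).mul <| (by fun_prop : Continuous fun y : ℝ ↦ 1 + c * y ^ 2).rpow_const
    fun y ↦ Or.inl (by positivity)

lemma integral_pow_mul_one_add_mul_sq_rpow_neg_le_one (hc : 0 ≤ c) (he : 0 ≤ e) (d : ℕ) :
    ∫ y in (0 : ℝ)..1, y ^ d * (1 + c * y ^ 2) ^ (-e) ≤ 1 := by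
  refine (le_abs_self _).trans ?_
  have hbound := intervalIntegral.norm_integral_le_of_norm_le_const (a := 0) (b := 1) (C := 1)
    (f := fun y : ℝ ↦ y ^ d * (1 + c * y ^ 2) ^ (-e)) fun y hy ↦ by
    rw [uIoc_of_le zero_le_one] at hy
    have hpow : |y| ^ d ≤ 1 := pow_le_one₀ (abs_nonneg y) (abs_le.2 ⟨by linarith [hy.1], hy.2⟩)
    have hrpow : (1 + c * y ^ 2) ^ (-e) ≤ 1 :=
      rpow_le_one_of_one_le_of_nonpos (le_add_of_nonneg_right (by positivity)) (neg_nonpos.2 he)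
    rw [norm_mul, norm_pow, Real.norm_eq_abs, Real.norm_of_nonneg (by positivity)]
    exact mul_le_one₀ hpow (by positivity) hrpow
  simpa using hbound

lemma pow_mul_one_add_mul_sq_rpow_neg_le (hc : 0 < c) (he : 0 ≤ e) (d : ℕ) {y : ℝ} (hy : 0 < y) :
    y ^ d * (1 + c * y ^ 2) ^ (-e) ≤ c ^ (-e) * y ^ ((d : ℝ) + 1 - 2 * e - 1) :=
  calc y ^ d * (1 + c * y ^ 2) ^ (-e) ≤ y ^ d * (c * y ^ 2) ^ (-e) :=
        mul_le_mul_of_nonneg_left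
          (rpow_le_rpow_of_nonpos (by positivity) (by linarith) (neg_nonpos.2 he)) (by positivity)
    _ = c ^ (-e) * y ^ ((d : ℝ) + 1 - 2 * e - 1) := by
        rw [mul_rpow hc.le (by positivity), ← rpow_natCast, ← rpow_natCast, ← rpow_mul hy.le,
          mul_left_comm, ← rpow_add hy]
        ring_nf

lemma integral_pow_mul_one_add_mul_sq_rpow_neg_le (hc : 0 < c) (he : 0 ≤ e) {d : ℕ}
    (hβ : (d : ℝ) + 1 - 2 * e ≠ 0) {R : ℝ} (hR : 1 ≤ R) :
    ∫ y in (0 : ℝ)..R, y ^ d * (1 + c * y ^ 2) ^ (-e) ≤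
      1 + c ^ (-e) * ((1 + R ^ ((d : ℝ) + 1 - 2 * e)) / |(d : ℝ) + 1 - 2 * e|) := by
  have hint := (continuous_pow_mul_one_add_mul_sq_rpow hc.le d (-e)).intervalIntegrable
    (μ := volume)
  rw [← intervalIntegral.integral_add_adjacent_intervals (hint 0 1) (hint 1 R)]
  gcongr
  · exact integral_pow_mul_one_add_mul_sq_rpow_neg_le_one hc.le he d
  · calc ∫ y in (1 : ℝ)..R, y ^ d * (1 + c * y ^ 2) ^ (-e)
        ≤ ∫ y in (1 : ℝ)..R, c ^ (-e) * y ^ ((d : ℝ) + 1 - 2 * e - 1) := by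
          refine intervalIntegral.integral_mono_on hR (hint 1 R) ?_ fun y hy ↦
            pow_mul_one_add_mul_sq_rpow_neg_le hc he d (zero_lt_one.trans_le hy.1)
          exact (intervalIntegral.intervalIntegrable_rpow (by simp [uIcc_of_le hR])).const_mul _
      _ ≤ _ := by
          rw [intervalIntegral.integral_const_mul]
          exact mul_le_mul_of_nonneg_left (integral_rpow_sub_one_le hβ hR) (by positivity)

end Radial

section HaarBall

variable {E : Type*} [NormedAddCommGroup E] [NormedSpace ℝ E] [FiniteDimensional ℝ E]
  [MeasurableSpace E] [BorelSpace E] (μ : Measure E) [μ.IsAddHaarMeasure]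

lemma setIntegral_ball_fun_norm_addHaar [Nontrivial E] {F : Type*} [NormedAddCommGroup F]
    [NormedSpace ℝ F] (f : ℝ → F) {R : ℝ} (hR : 0 ≤ R) :
    ∫ x in ball (0 : E) R, f ‖x‖ ∂μ = Module.finrank ℝ E • μ.real (ball 0 1) •
      ∫ y in 0..R, y ^ (Module.finrank ℝ E - 1) • f y := by
  have hball : (ball (0 : E) R).indicator (fun x ↦ f ‖x‖) = fun x ↦ (Iio R).indicator f ‖x‖ := by
    ext x
    by_cases hx : ‖x‖ < R <;> simp [indicator, hx]
  rw [← integral_indicator measurableSet_ball, hball, integral_fun_norm_addHaar μ,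
    intervalIntegral.integral_of_le hR, integral_Ioc_eq_integral_Ioo, ← Ioi_inter_Iio,
    ← setIntegral_indicator measurableSet_Iio, indicator_smul]

lemma setIntegral_ball_inter_one_add_mul_norm_sq_rpow_le {c : ℝ} (hc : 0 ≤ c) (a R : ℝ)
    (s : Set E) :
    ∫ x in ball (0 : E) R ∩ s, (1 + c * ‖x‖ ^ 2) ^ a ∂μ ≤
      ∫ x in ball (0 : E) R, (1 + c * ‖x‖ ^ 2) ^ a ∂μ := by
  have hcont : Continuous fun x : E ↦ (1 + c * ‖x‖ ^ 2) ^ a :=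
    (by fun_prop : Continuous fun x : E ↦ 1 + c * ‖x‖ ^ 2).rpow_const
      fun x ↦ Or.inl (by positivity)
  exact setIntegral_mono_set
    ((hcont.continuousOn.integrableOn_compact (isCompact_closedBall 0 R)).mono_set
      ball_subset_closedBall) (ae_of_all _ fun x ↦ by positivity) inter_subset_left.eventuallyLE

lemma setIntegral_ball_one_add_mul_norm_sq_rpow_neg_le [Nontrivial E] {c e : ℝ} (hc : 0 < c)
    (he : 0 ≤ e) (hβ : (Module.finrank ℝ E : ℝ) - 2 * e ≠ 0) :
    ∃ K > 0, ∀ R ≥ 1, ∫ x in ball (0 : E) R, (1 + c * ‖x‖ ^ 2) ^ (-e) ∂μ ≤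
      K * (1 + R ^ ((Module.finrank ℝ E : ℝ) - 2 * e)) := by
  set d := Module.finrank ℝ E
  set β : ℝ := d - 2 * e
  have hd : ((d - 1 : ℕ) : ℝ) + 1 = d := by
    rw [Nat.cast_sub Module.finrank_pos, Nat.cast_one, sub_add_cancel]
  have hV : 0 < μ.real (ball 0 1) :=
    ENNReal.toReal_pos (measure_ball_pos μ 0 one_pos).ne' measure_ball_lt_top.ne
  have hdV : 0 < d * μ.real (ball 0 1) := mul_pos (Nat.cast_pos.2 Module.finrank_pos) hV
  set A := c ^ (-e) / |β|
  refine ⟨d * μ.real (ball 0 1) * (1 + A), by positivity, fun R hR ↦ ?_⟩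
  have hradial := integral_pow_mul_one_add_mul_sq_rpow_neg_le hc he (d := d - 1) (by rwa [hd]) hR
  rw [hd] at hradial
  have hRβ : 0 ≤ R ^ β := rpow_nonneg (zero_le_one.trans hR) β
  have hsplit : c ^ (-e) * ((1 + R ^ β) / |β|) = A + A * R ^ β := by ring
  rw [setIntegral_ball_fun_norm_addHaar μ (fun r ↦ (1 + c * r ^ 2) ^ (-e)) (by linarith),
    nsmul_eq_mul, smul_eq_mul, ← mul_assoc]
  calc d * μ.real (ball 0 1) * ∫ y in (0 : ℝ)..R, y ^ (d - 1) • (1 + c * y ^ 2) ^ (-e)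
      ≤ d * μ.real (ball 0 1) * (1 + A + A * R ^ β) := by
        rw [add_assoc, ← hsplit]
        exact mul_le_mul_of_nonneg_left hradial hdV.le
    _ ≤ d * μ.real (ball 0 1) * (1 + A) * (1 + R ^ β) := by nlinarith [mul_nonneg hdV.le hRβ]

end HaarBall

lemma mul_one_add_rpow_le {K t s : ℝ} (hK : 0 ≤ K) (ht : 0 ≤ t) (hs0 : 0 ≤ s) (hs1 : s ≤ 1) :
    (K * (1 + t)) ^ s ≤ K ^ s * (1 + t ^ s) := by
  rw [mul_rpow hK (by positivity)]
  gcongr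
  simpa using rpow_add_le_add_rpow zero_le_one ht hs0 hs1

lemma sobolevS_pos {n : ℕ} (hn : 2 < n) : 0 < sobolevS n := by
  have hn' : (2 : ℝ) < n := by exact_mod_cast hn
  have hΓ : 0 < Gamma n / Gamma ((n : ℝ) / 2) :=
    div_pos (Gamma_pos_of_pos (by linarith)) (Gamma_pos_of_pos (by linarith))
  have : 0 < (n : ℝ) - 2 := by linarith
  unfold sobolevS
  positivity

lemma bubbleC_pos {n : ℕ} (hn : 2 < n) : 0 < bubbleC n := by
  have hn' : (0 : ℝ) < n - 2 := by rw [sub_pos]; exact_mod_cast hn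
  have := sobolevS_pos hn
  unfold bubbleC
  positivity

lemma bubble_zero_one_rpow {n : ℕ} (hc : 0 ≤ bubbleC n) (x : EuclideanSpace ℝ (Fin n)) (q : ℝ) :
    bubble n 0 1 x ^ q = (1 + bubbleC n * ‖x‖ ^ 2) ^ (-(((n : ℝ) - 2) / 2 * q)) := by
  have hpos : 0 < 1 + bubbleC n * ‖x‖ ^ 2 := by positivity
  rw [bubble, sub_zero, one_pow, one_div, inv_rpow hpos.le, ← rpow_neg hpos.le,
    ← rpow_mul hpos.le, neg_mul]

lemma sq_sub_twelve_mul_add_four_ne_zero (n : ℕ) : (n : ℝ) ^ 2 - 12 * n + 4 ≠ 0 := by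
  rcases le_or_gt n 11 with h | h
  · interval_cases n <;> norm_num
  · have : (12 : ℝ) ≤ n := by exact_mod_cast h
    nlinarith

/-- with `r₁ = 2n/(n+2)`, the `L^{r₁}`-norm of `U₁^{r₁−1}` over
the half-ball `B_{1/μ}⁺` is bounded by `C(1 + μ^{(n²−12n+4)/(2(n+2))})` for
`μ ∈ (0,1]`. -/
theorem interior_norm_bound (n : ℕ) (hn : 3 ≤ n) :
    ∃ C > (0 : ℝ), ∀ μ : ℝ, 0 < μ → μ ≤ 1 →
      (∫ x in Metric.ball 0 (1 / μ) ∩ upperHalf n,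
          bubble n 0 1 x ^
            ((2 * (n : ℝ) / ((n : ℝ) + 2) - 1) * (2 * (n : ℝ) / ((n : ℝ) + 2)))) ^
        (((n : ℝ) + 2) / (2 * n)) ≤
      C * (1 + μ ^ (((n : ℝ) ^ 2 - 12 * n + 4) / (2 * ((n : ℝ) + 2)))) := by
  have : NeZero n := ⟨by omega⟩
  have hn' : (3 : ℝ) ≤ n := by exact_mod_cast hn
  have hc := bubbleC_pos (n := n) (by omega)
  simp_rw [bubble_zero_one_rpow hc.le]
  set e : ℝ := ((n : ℝ) - 2) / 2 *
    ((2 * (n : ℝ) / ((n : ℝ) + 2) - 1) * (2 * (n : ℝ) / ((n : ℝ) + 2))) with he_def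
  have he : e = (n : ℝ) * ((n : ℝ) - 2) ^ 2 / ((n : ℝ) + 2) ^ 2 := by
    rw [he_def]; field_simp; ring
  have hβs : ((n : ℝ) - 2 * e) * (((n : ℝ) + 2) / (2 * n)) =
      -(((n : ℝ) ^ 2 - 12 * n + 4) / (2 * ((n : ℝ) + 2))) := by rw [he]; field_simp; ring
  have hβ : (n : ℝ) - 2 * e ≠ 0 := fun h ↦ by
    rw [h, zero_mul, eq_comm, neg_eq_zero, div_eq_zero_iff] at hβs
    exact hβs.elim (sq_sub_twelve_mul_add_four_ne_zero n) (by positivity)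
  obtain ⟨K, hK, hball⟩ := setIntegral_ball_one_add_mul_norm_sq_rpow_neg_le
    (volume : Measure (EuclideanSpace ℝ (Fin n))) hc (e := e) (by rw [he]; positivity)
    (by rwa [finrank_euclideanSpace_fin])
  rw [finrank_euclideanSpace_fin] at hball
  refine ⟨K ^ (((n : ℝ) + 2) / (2 * n)), by positivity, fun μ hμ hμ1 ↦ ?_⟩
  have hs : ((n : ℝ) + 2) / (2 * n) ≤ 1 := by
    rw [div_le_one (by positivity)]
    linarith
  calc _ ≤ (K * (1 + (1 / μ) ^ ((n : ℝ) - 2 * e))) ^ (((n : ℝ) + 2) / (2 * n)) :=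
        rpow_le_rpow (integral_nonneg fun x ↦ by positivity)
          ((setIntegral_ball_inter_one_add_mul_norm_sq_rpow_le volume hc.le _ _ _).trans
            (hball _ (one_le_one_div hμ hμ1))) (by positivity)
    _ ≤ _ := mul_one_add_rpow_le hK.le (by positivity) (by positivity) hs
    _ = _ := by
      rw [← rpow_mul (by positivity), hβs, one_div, inv_rpow hμ.le, rpow_neg hμ.le, inv_inv]
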